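/- arXiv:2302.08858 — 5 statements merged into one kernel-verified Lean document; each statement's English description precedes it below -/
import Mathlib

section
/- For every integer N ≥ 2, every t ≥ 0, and every vector v ∈ ℝ^{N−1}, one has max_{1 ≤ n ≤ N−1} |(exp(t N² D^N) v)_n| ≤ max_{1 ≤ n ≤ N−1} |v_n|; that is, exp(t N² D^N) is a contraction for the supremum norm on ℝ^{N−1}. -/
/-- The finite-difference discretization of the Laplacian with homogeneous Dirichlet
boundary conditions: the `(N-1) × (N-1)` matrix with `-2` on the diagonal, `1` on the
sub- and super-diagonal, and `0` elsewhere. -/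
def DN (N : ℕ) : Matrix (Fin (N - 1)) (Fin (N - 1)) ℝ :=
  fun i j =>
    if (i : ℕ) = (j : ℕ) then -2
    else if (i : ℕ) + 1 = (j : ℕ) ∨ (j : ℕ) + 1 = (i : ℕ) then 1
    else 0

/-!
Write `Dᴺ = A - 2 I` with `A` the adjacency matrix of the path graph on `N - 1` vertices.
In the ℓ∞ operator norm (maximal absolute row sum), which is the operator norm for the sup norm
on vectors, `‖A‖ ≤ 2`. Since `2 I` is central, `exp (s (A - 2 I)) = e^{-2s} exp (s A)`, and
`‖exp (s A)‖ ≤ e^{s ‖A‖} ≤ e^{2s}`, so `exp (s Dᴺ)` has norm at most `1` for `s ≥ 0`.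
-/

open NormedSpace

section BanachAlgebra

variable {𝔸 : Type*} [NormedRing 𝔸] [NormedAlgebra ℝ 𝔸] [NormOneClass 𝔸]

theorem NormedSpace.norm_exp_le_exp_norm (x : 𝔸) : ‖exp x‖ ≤ Real.exp ‖x‖ := by
  rw [exp_eq_tsum ℝ, Real.exp_eq_exp_ℝ, exp_eq_tsum ℝ]
  refine (norm_tsum_le_tsum_norm (norm_expSeries_summable' x)).trans <|
    Summable.tsum_le_tsum (fun n => ?_) (norm_expSeries_summable' x) (expSeries_summable' ‖x‖)
  rw [norm_smul, smul_eq_mul, Real.norm_of_nonneg (by positivity)]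
  gcongr
  exact norm_pow_le x n

theorem NormedSpace.norm_exp_sub_algebraMap_le_one [CompleteSpace 𝔸] {x : 𝔸} {r : ℝ}
    (hx : ‖x‖ ≤ r) : ‖exp (x - algebraMap ℝ 𝔸 r)‖ ≤ 1 := by
  let +nondep : NormedAlgebra ℚ 𝔸 := .restrictScalars ℚ ℝ 𝔸
  have hexp : exp (x - algebraMap ℝ 𝔸 r) = Real.exp (-r) • exp x := by
    rw [sub_eq_add_neg, ← map_neg, exp_add_of_commute (Algebra.commutes _ x).symm,
      ← algebraMap_exp_comm (-r), ← Algebra.commutes, ← Algebra.smul_def, Real.exp_eq_exp_ℝ]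
  calc ‖exp (x - algebraMap ℝ 𝔸 r)‖ ≤ Real.exp (-r) * Real.exp ‖x‖ := by
        rw [hexp, norm_smul, Real.norm_of_nonneg (Real.exp_pos _).le]
        gcongr
        exact norm_exp_le_exp_norm x
    _ ≤ Real.exp (-r) * Real.exp r := by gcongr
    _ = 1 := by rw [← Real.exp_add, neg_add_cancel, Real.exp_zero]

end BanachAlgebra

attribute [local instance] Matrix.linftyOpNormedAddCommGroup Matrix.linftyOpNormedRing
  Matrix.linftyOpNormedAlgebra

namespace SimpleGraph

variable {V : Type*} [Fintype V] (G : SimpleGraph V) [DecidableRel G.Adj]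

theorem linfty_opNorm_adjMatrix_le_maxDegree : ‖G.adjMatrix ℝ‖ ≤ G.maxDegree := by
  have hrow (i : V) : ∑ j, ‖G.adjMatrix ℝ i j‖₊ = G.degree i := by
    simp [adjMatrix_apply, apply_ite, ← card_neighborFinset_eq_degree, neighborFinset_eq_filter,
      Finset.sum_boole]
  rw [Matrix.linfty_opNorm_def]
  exact_mod_cast Finset.sup_le fun i _ =>
    (hrow i).trans_le (by exact_mod_cast G.degree_le_maxDegree i)

theorem linfty_opNorm_exp_smul_adjMatrix_sub_le_one [DecidableEq V] [Nonempty V] {d s : ℝ}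
    (hd : (G.maxDegree : ℝ) ≤ d) (hs : 0 ≤ s) :
    ‖exp (s • (G.adjMatrix ℝ - algebraMap ℝ _ d))‖ ≤ 1 := by
  have hscalar : s • algebraMap ℝ (Matrix V V ℝ) d = algebraMap ℝ _ (s * d) := by
    rw [Algebra.smul_def, map_mul]
  rw [smul_sub, hscalar]
  refine norm_exp_sub_algebraMap_le_one ?_
  rw [norm_smul, Real.norm_of_nonneg hs]
  exact mul_le_mul_of_nonneg_left (G.linfty_opNorm_adjMatrix_le_maxDegree.trans hd) hs

instance {n : ℕ} : DecidableRel (pathGraph n).Adj := fun _ _ => decidable_of_iff' _ pathGraph_adj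

theorem pathGraph_maxDegree_le_two (n : ℕ) : (pathGraph n).maxDegree ≤ 2 := by
  refine maxDegree_le_of_forall_degree_le _ _ fun v => ?_
  rw [← card_neighborFinset_eq_degree, ← Finset.card_map Fin.valEmbedding]
  refine (Finset.card_le_card (t := ({(v : ℕ) - 1, (v : ℕ) + 1} : Finset ℕ)) fun u hu => ?_).trans
    Finset.card_le_two
  simp only [Finset.mem_map, mem_neighborFinset, pathGraph_adj, Fin.valEmbedding_apply] at hu
  simp only [Finset.mem_insert, Finset.mem_singleton]
  omega

end SimpleGraph

open SimpleGraph Matrix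

theorem DN_eq_adjMatrix_pathGraph_sub (N : ℕ) :
    DN N = (pathGraph (N - 1)).adjMatrix ℝ - algebraMap ℝ _ 2 := by
  ext i j
  simp only [DN, Matrix.sub_apply, adjMatrix_apply, pathGraph_adj, algebraMap_matrix_apply,
    Fin.ext_iff]
  split_ifs <;> first | omega | norm_num

theorem exp_discrete_laplacian_sup_contraction_general (N : ℕ)
    (t : ℝ) (ht : 0 ≤ t) (v : Fin (N - 1) → ℝ) :
    ∀ n : Fin (N - 1),
      |((NormedSpace.exp (t • ((N : ℝ) ^ 2 • DN N))).mulVec v) n| ≤ ⨆ k, |v k| := by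
  intro n
  have : Nonempty (Fin (N - 1)) := ⟨n⟩
  have hcontr : ‖exp (t • ((N : ℝ) ^ 2 • DN N))‖ ≤ 1 := by
    rw [smul_smul, DN_eq_adjMatrix_pathGraph_sub]
    exact linfty_opNorm_exp_smul_adjMatrix_sub_le_one _
      (by exact_mod_cast pathGraph_maxDegree_le_two _) (by positivity)
  calc |(exp (t • ((N : ℝ) ^ 2 • DN N)) *ᵥ v) n| ≤ ‖exp (t • ((N : ℝ) ^ 2 • DN N)) *ᵥ v‖ :=
        (Real.norm_eq_abs _).symm.trans_le (norm_le_pi_norm _ n)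
    _ ≤ ‖exp (t • ((N : ℝ) ^ 2 • DN N))‖ * ‖v‖ := linfty_opNorm_mulVec _ _
    _ ≤ ‖v‖ := mul_le_of_le_one_left (norm_nonneg _) hcontr
    _ ≤ ⨆ k, |v k| := (pi_norm_le_iff_of_nonempty _).2 fun k =>
        le_ciSup (f := fun k => |v k|) (Set.finite_range _).bddAbove k

/-- For every integer `N ≥ 2`, every `t ≥ 0` and every vector
`v ∈ ℝ^{N-1}`, one has `max_n |(exp (t N² Dᴺ) v)_n| ≤ max_n |v_n|`: the discrete heat
semigroup is a contraction for the supremum norm on `ℝ^{N-1}`. -/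
theorem exp_discrete_laplacian_sup_contraction (N : ℕ) (hN : 2 ≤ N)
    (t : ℝ) (ht : 0 ≤ t) (v : Fin (N - 1) → ℝ) :
    ∀ n : Fin (N - 1),
      |((NormedSpace.exp (t • ((N : ℝ) ^ 2 • DN N))).mulVec v) n| ≤ ⨆ k, |v k| :=
  exp_discrete_laplacian_sup_contraction_general N t ht v
end

section
/- There exists a constant C ∈ (0, ∞) such that for every integer N ≥ 2, every t > 0, and every 1 ≤ n ≤ N−1, one has N · Σ_{k=1}^{N−1} ((exp(t N² D^N))_{nk})² ≤ C/√t. -/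
open Real Finset Matrix

theorem sum_range_cos_two_pi_mul_div (N r : ℕ) (hr : ¬ N ∣ r) :
    ∑ k ∈ range N, cos (2 * π * r * k / N) = 0 := by
  rcases Nat.eq_zero_or_pos N with rfl | hN
  · simp
  set ζ := Complex.exp (2 * π * Complex.I / N)
  have hζ : IsPrimitiveRoot ζ N := Complex.isPrimitiveRoot_exp N hN.ne'
  have hζr : ζ ^ r ≠ 1 := by rwa [Ne, hζ.pow_eq_one_iff_dvd]
  have hζrN : (ζ ^ r) ^ N = 1 := by rw [← pow_mul, mul_comm, pow_mul, hζ.pow_eq_one, one_pow]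
  have hgeom : ∑ k ∈ range N, (ζ ^ r) ^ k = 0 := by
    rw [geom_sum_eq hζr, hζrN, sub_self, zero_div]
  have hre (k : ℕ) : ((ζ ^ r) ^ k).re = cos (2 * π * r * k / N) := by
    rw [← pow_mul, ← Complex.exp_nat_mul, ← Complex.exp_ofReal_mul_I_re]
    congr 2
    push_cast
    ring
  simp_rw [← hre, ← Complex.re_sum, hgeom, Complex.zero_re]

theorem sum_range_sin_sq_mul_pi_div (N r : ℕ) (hr : ¬ N ∣ r) :
    ∑ k ∈ range N, sin (r * k * π / N) ^ 2 = N / 2 := by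
  have hcos : ∑ k ∈ range N, cos (2 * (r * k * π / N)) = 0 := by
    rw [← sum_range_cos_two_pi_mul_div N r hr]
    congr! 2
    ring
  simp_rw [sin_sq_eq_half_sub, sum_sub_distrib, ← sum_div, hcos, sum_const, card_range,
    nsmul_eq_mul]
  ring

theorem sum_range_exp_neg_mul_sq_le {a : ℝ} (ha : 0 < a) (M : ℕ) :
    ∑ j ∈ range M, exp (-a * ((j + 1 : ℕ) : ℝ) ^ 2) ≤ √(π / a) / 2 := by
  have hanti : AntitoneOn (fun x : ℝ ↦ exp (-a * x ^ 2)) (Set.Ici 0) := by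
    intro x hx y _ hxy
    simp only [exp_le_exp, neg_mul, neg_le_neg_iff]
    gcongr
  calc ∑ j ∈ range M, exp (-a * ((j + 1 : ℕ) : ℝ) ^ 2)
      ≤ ∫ x in (0 : ℝ)..M, exp (-a * x ^ 2) := by
        simpa using (hanti.mono Set.Icc_subset_Ici_self).sum_le_integral (x₀ := 0) (a := M)
    _ ≤ ∫ x in Set.Ioi 0, exp (-a * x ^ 2) := by
        rw [intervalIntegral.integral_of_le (Nat.cast_nonneg M)]
        exact MeasureTheory.setIntegral_mono_set (integrable_exp_neg_mul_sq ha).integrableOn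
          (.of_forall fun _ ↦ (exp_pos _).le) Set.Ioc_subset_Ioi_self.eventuallyLE
    _ = √(π / a) / 2 := integral_gaussian_Ioi a

theorem Matrix.IsSymm.dotProduct_eq_zero_of_mulVec_eq_smul {R n : Type*} [CommRing R]
    [NoZeroDivisors R] [Fintype n] {A : Matrix n n R} (hA : A.IsSymm) {v w : n → R} {μ ν : R}
    (hv : A *ᵥ v = μ • v) (hw : A *ᵥ w = ν • w) (hμν : μ ≠ ν) : v ⬝ᵥ w = 0 := by
  have h : μ * (v ⬝ᵥ w) = ν * (v ⬝ᵥ w) := calc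
    μ * (v ⬝ᵥ w) = (A *ᵥ v) ⬝ᵥ w := by rw [hv, smul_dotProduct, smul_eq_mul]
    _ = v ⬝ᵥ (A *ᵥ w) := by rw [dotProduct_mulVec, ← vecMul_transpose, hA.eq, dotProduct_comm]
    _ = ν * (v ⬝ᵥ w) := by rw [hw, dotProduct_smul, smul_eq_mul]
  exact (mul_eq_zero.1 (by rw [sub_mul, h, sub_self])).resolve_left (sub_ne_zero.2 hμν)

theorem Matrix.sum_exp_apply_sq_of_isSymm {ι : Type*} [Fintype ι] [DecidableEq ι]
    {A : Matrix ι ι ℝ} (hA : A.IsSymm) (i : ι) :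
    ∑ k, NormedSpace.exp A i k ^ 2 = NormedSpace.exp (2 • A) i i := by
  have hexp : (NormedSpace.exp A).IsSymm := by
    rw [IsSymm, ← exp_transpose, hA.eq]
  rw [exp_nsmul, sq, mul_apply]
  congr! 1 with k
  rw [sq, hexp.apply i k]

theorem two_le_of_fin_sub_one {N : ℕ} (j : Fin (N - 1)) : 2 ≤ N := by
  have := j.isLt
  omega

theorem DN_apply (N : ℕ) (i k : Fin (N - 1)) :
    DN N i k = -2 * (if (k : ℕ) = i then 1 else 0) + (if (k : ℕ) = i + 1 then 1 else 0) +
      (if (k : ℕ) + 1 = i then 1 else 0) := by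
  simp only [DN]
  split_ifs <;> first | (exfalso; omega) | norm_num

theorem DN_isSymm (N : ℕ) : (DN N).IsSymm := by
  ext i j
  simp only [transpose_apply, DN]
  split_ifs <;> first | rfl | (exfalso; omega)

theorem DN_mulVec_apply {N : ℕ} {g : ℕ → ℝ} (hg₀ : g 0 = 0) (hgN : g N = 0) (i : Fin (N - 1)) :
    (DN N *ᵥ fun k ↦ g (k + 1)) i = g i + g (i + 2) - 2 * g (i + 1) := by
  simp only [mulVec, dotProduct, DN_apply, add_mul, mul_assoc, sum_add_distrib, ← mul_sum,
    ite_mul, one_mul, zero_mul]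
  rw [Fin.sum_univ_eq_sum_range (fun k ↦ if k = (i : ℕ) then g (k + 1) else 0),
    Fin.sum_univ_eq_sum_range (fun k ↦ if k = (i : ℕ) + 1 then g (k + 1) else 0),
    Fin.sum_univ_eq_sum_range (fun k ↦ if k + 1 = (i : ℕ) then g (k + 1) else 0)]
  have hi := i.isLt
  have hright : (if (i : ℕ) + 1 < N - 1 then g (i + 1 + 1) else 0) = g (i + 2) := by
    split_ifs with h
    · rfl
    · rw [show (i : ℕ) + 2 = N by omega, hgN]
  simp only [sum_ite_eq', mem_range, if_pos hi, hright]
  generalize (i : ℕ) = m at hi ⊢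
  cases m with
  | zero =>
    simp only [Nat.add_eq_zero_iff, one_ne_zero, and_false, if_false, sum_const_zero, hg₀]
    ring
  | succ m =>
    simp only [Nat.add_right_cancel_iff, sum_ite_eq', mem_range, show m < N - 1 by omega,
      if_true]
    ring

noncomputable def sineMatrix (N : ℕ) : Matrix (Fin (N - 1)) (Fin (N - 1)) ℝ :=
  of fun j k ↦ sin ((j + 1 : ℕ) * (k + 1 : ℕ) * π / N)

noncomputable def DNEigenvalue (N : ℕ) (j : Fin (N - 1)) : ℝ :=
  2 * cos ((j + 1 : ℕ) * π / N) - 2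

@[simp]
theorem sineMatrix_apply (N : ℕ) (j k : Fin (N - 1)) :
    sineMatrix N j k = sin ((j + 1 : ℕ) * (k + 1 : ℕ) * π / N) :=
  rfl

theorem sineMatrix_isSymm (N : ℕ) : (sineMatrix N).IsSymm := by
  ext j k
  simp only [transpose_apply, sineMatrix_apply, mul_comm]

theorem DN_mulVec_sineMatrix (N : ℕ) (j : Fin (N - 1)) :
    DN N *ᵥ sineMatrix N j = DNEigenvalue N j • sineMatrix N j := by
  have hN : (N : ℝ) ≠ 0 := by have := two_le_of_fin_sub_one j; positivity
  set θ : ℝ := (j + 1 : ℕ) * π / N with hθ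
  have hrow : sineMatrix N j = fun k : Fin (N - 1) ↦ sin ((k + 1 : ℕ) * θ) := by
    ext k
    rw [sineMatrix_apply, hθ]
    ring_nf
  have hθN : sin (N * θ) = 0 := by
    rw [show N * θ = (j + 1 : ℕ) * π by rw [hθ]; field_simp, sin_nat_mul_pi]
  ext i
  rw [hrow, DN_mulVec_apply (g := fun x : ℕ ↦ sin (x * θ)) (by simp) hθN, Pi.smul_apply,
    smul_eq_mul, DNEigenvalue, ← hθ]
  have hprev : (i : ℝ) * θ = (i + 1 : ℕ) * θ - θ := by push_cast; ring
  have hnext : ((i + 2 : ℕ) : ℝ) * θ = (i + 1 : ℕ) * θ + θ := by push_cast; ring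
  rw [hprev, hnext, sin_sub, sin_add]
  ring

theorem DN_mul_sineMatrix (N : ℕ) :
    DN N * sineMatrix N = sineMatrix N * diagonal (DNEigenvalue N) := by
  ext i j
  calc (DN N * sineMatrix N) i j = (DN N *ᵥ sineMatrix N j) i := by
        simp only [mul_apply, mulVec, dotProduct, (sineMatrix_isSymm N).apply]
    _ = (sineMatrix N * diagonal (DNEigenvalue N)) i j := by
        rw [DN_mulVec_sineMatrix, mul_diagonal, Pi.smul_apply, smul_eq_mul, mul_comm,
          (sineMatrix_isSymm N).apply]

theorem DNEigenvalue_injective (N : ℕ) : Function.Injective (DNEigenvalue N) := by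
  intro j k h
  have hN : (0 : ℝ) < N := by have := two_le_of_fin_sub_one j; positivity
  have hmem (i : Fin (N - 1)) : (i + 1 : ℕ) * π / N ∈ Set.Icc 0 π := by
    refine ⟨by positivity, div_le_of_le_mul₀ hN.le pi_pos.le ?_⟩
    rw [mul_comm]
    gcongr
    exact_mod_cast (show (i : ℕ) + 1 ≤ N by omega)
  have := injOn_cos (hmem j) (hmem k) (by unfold DNEigenvalue at h; linarith)
  rw [div_left_inj' hN.ne', mul_left_inj' pi_ne_zero, Nat.cast_inj] at this
  exact Fin.ext (by omega)

theorem DNEigenvalue_le (N : ℕ) (j : Fin (N - 1)) :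
    DNEigenvalue N j ≤ -4 * ((j + 1 : ℕ) : ℝ) ^ 2 / N ^ 2 := by
  have hN : (0 : ℝ) < N := by have := two_le_of_fin_sub_one j; positivity
  have hθ : |(j + 1 : ℕ) * π / N| ≤ π := by
    rw [abs_of_nonneg (by positivity), div_le_iff₀ hN, mul_comm]
    gcongr
    exact_mod_cast (show (j : ℕ) + 1 ≤ N by omega)
  have := cos_le_one_sub_mul_cos_sq hθ
  rw [DNEigenvalue]
  field_simp at this ⊢
  nlinarith [pi_pos]

theorem sineMatrix_dotProduct (N : ℕ) (j k : Fin (N - 1)) :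
    sineMatrix N j ⬝ᵥ sineMatrix N k = if j = k then (N / 2 : ℝ) else 0 := by
  split_ifs with h
  · subst h
    have hN := two_le_of_fin_sub_one j
    have hsum := sum_range_sin_sq_mul_pi_div N (j + 1)
      (Nat.not_dvd_of_pos_of_lt (by omega) (by omega))
    have hsucc := sum_range_succ' (fun k : ℕ ↦ sin ((j + 1 : ℕ) * k * π / N) ^ 2) (N - 1)
    rw [Nat.sub_add_cancel (by omega), hsum, Nat.cast_zero, mul_zero, zero_mul, zero_div,
      sin_zero, sq, mul_zero, add_zero] at hsucc
    simp only [dotProduct, sineMatrix_apply, ← sq]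
    rw [hsucc, Fin.sum_univ_eq_sum_range (fun k ↦ sin ((j + 1 : ℕ) * (k + 1 : ℕ) * π / N) ^ 2)]
  · exact (DN_isSymm N).dotProduct_eq_zero_of_mulVec_eq_smul (DN_mulVec_sineMatrix N j)
      (DN_mulVec_sineMatrix N k) ((DNEigenvalue_injective N).ne h)

theorem sineMatrix_mul_self (N : ℕ) : sineMatrix N * sineMatrix N = (N / 2 : ℝ) • 1 := by
  ext j k
  rw [mul_apply, Matrix.smul_apply, one_apply, smul_ite, smul_eq_mul, mul_one, smul_zero,
    ← sineMatrix_dotProduct]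
  simp only [dotProduct, (sineMatrix_isSymm N).apply]

theorem exp_smul_DN (N : ℕ) (c : ℝ) :
    NormedSpace.exp (c • DN N) = (2 / N : ℝ) •
      (sineMatrix N * diagonal (fun j ↦ exp (c * DNEigenvalue N j)) * sineMatrix N) := by
  rcases Nat.lt_or_ge N 2 with hN | hN
  · have : IsEmpty (Fin (N - 1)) := ⟨fun j ↦ by have := two_le_of_fin_sub_one j; omega⟩
    exact Subsingleton.elim _ _
  have hS : sineMatrix N * ((2 / N : ℝ) • sineMatrix N) = 1 := by
    rw [Matrix.mul_smul, sineMatrix_mul_self, smul_smul,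
      div_mul_div_cancel₀ (by positivity), div_self two_ne_zero, one_smul]
  have hdet : IsUnit (sineMatrix N).det := isUnit_det_of_right_inverse hS
  have hconj : c • DN N = sineMatrix N * diagonal (c • DNEigenvalue N) * (sineMatrix N)⁻¹ := by
    rw [diagonal_smul, Matrix.mul_smul, Matrix.smul_mul, ← DN_mul_sineMatrix,
      mul_nonsing_inv_cancel_right _ _ hdet]
  rw [hconj, Matrix.exp_conj _ _ ((isUnit_iff_isUnit_det _).2 hdet), exp_diagonal,
    inv_eq_right_inv hS, Matrix.mul_smul]
  congr 4
  ext j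
  simp [Real.exp_eq_exp_ℝ]

theorem exp_smul_DN_apply_self (N : ℕ) (c : ℝ) (n : Fin (N - 1)) :
    NormedSpace.exp (c • DN N) n n =
      2 / N * ∑ j, exp (c * DNEigenvalue N j) * sineMatrix N n j ^ 2 := by
  rw [exp_smul_DN, Matrix.smul_apply, smul_eq_mul, mul_apply]
  congr 1
  refine sum_congr rfl fun j _ ↦ ?_
  rw [mul_diagonal, (sineMatrix_isSymm N).apply]
  ring

theorem mul_exp_smul_DN_apply_self_le (N : ℕ) {t : ℝ} (ht : 0 < t) (n : Fin (N - 1)) :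
    N * NormedSpace.exp ((t * N ^ 2) • DN N) n n ≤ √(π / (4 * t)) := by
  have hN : (0 : ℝ) < N := by have := two_le_of_fin_sub_one n; positivity
  rw [exp_smul_DN_apply_self, ← mul_assoc, mul_div_cancel₀ _ hN.ne']
  calc 2 * ∑ j, exp (t * N ^ 2 * DNEigenvalue N j) * sineMatrix N n j ^ 2
      ≤ 2 * ∑ j : Fin (N - 1), exp (-(4 * t) * ((j + 1 : ℕ) : ℝ) ^ 2) := by
        gcongr with j
        refine (mul_le_of_le_one_right (exp_pos _).le (sin_sq_le_one _)).trans (exp_le_exp.2 ?_)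
        calc t * N ^ 2 * DNEigenvalue N j ≤ t * N ^ 2 * (-4 * ((j + 1 : ℕ) : ℝ) ^ 2 / N ^ 2) := by
              gcongr
              exact DNEigenvalue_le N j
          _ = -(4 * t) * ((j + 1 : ℕ) : ℝ) ^ 2 := by field_simp
    _ ≤ 2 * (√(π / (4 * t)) / 2) := by
        gcongr
        exact (Fin.sum_univ_eq_sum_range (fun j ↦ exp (-(4 * t) * ((j + 1 : ℕ) : ℝ) ^ 2)) _
          ).trans_le (sum_range_exp_neg_mul_sq_le (by positivity) _)
    _ = √(π / (4 * t)) := by ring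

/-- There exists a constant `C ∈ (0, ∞)` such that for every `N ≥ 2`,
every `t > 0` and every row index `n`, one has
`N · Σ_k ((exp (t N² Dᴺ))_{nk})² ≤ C / √t`. -/
theorem exp_discrete_laplacian_squared_row_sum_bound :
    ∃ C : ℝ, 0 < C ∧
      ∀ (N : ℕ), 2 ≤ N → ∀ (t : ℝ), 0 < t → ∀ n : Fin (N - 1),
        (N : ℝ) * ∑ k : Fin (N - 1),
            (NormedSpace.exp (t • ((N : ℝ) ^ 2 • DN N)) n k) ^ 2 ≤
          C / Real.sqrt t := by
  refine ⟨√(π / 8), by positivity, fun N _ t ht n ↦ ?_⟩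
  rw [smul_smul, sum_exp_apply_sq_of_isSymm ((DN_isSymm N).smul _), two_nsmul, ← add_smul,
    show t * N ^ 2 + t * N ^ 2 = 2 * t * N ^ 2 by ring]
  calc _ ≤ √(π / (4 * (2 * t))) := mul_exp_smul_DN_apply_self_le N (by positivity) n
    _ = √(π / 8) / √t := by rw [← sqrt_div' _ ht.le]; ring_nf
end

section
/- Let λ > 0, τ > 0 and t > 0 be real numbers. Then ∫_0^t e^{−2λ(t−s)} (1 − e^{−λ(s − ℓ_τ(s))})² ds ≤ min(1, λτ)² / (2λ). -/
/-- For a step size `τ > 0`, `ℓ_τ (s) = τ ⌊s/τ⌋` is the left endpoint of the grid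
interval of size `τ` containing `s ≥ 0`. -/
noncomputable def leftGrid (τ s : ℝ) : ℝ := τ * ⌊s / τ⌋₊

/-!
On `[0, t]` the increment `s - ℓ_τ(s)` lies in `[0, τ]`, so `0 ≤ 1 - e^{-λ(s - ℓ_τ(s))} ≤ min(1, λτ)`
by `1 - e^{-y} ≤ min(1, y)`. Bounding the square by `min(1, λτ)²` leaves the exponential kernel,
whose integral over `[0, t]` is `(1 - e^{-2λt}) / (2λ) ≤ 1 / (2λ)`.
-/

open Real Set

section LeftGrid

variable {τ : ℝ}

lemma leftGrid_le_self (hτ : 0 < τ) {s : ℝ} (hs : 0 ≤ s) : leftGrid τ s ≤ s :=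
  calc leftGrid τ s ≤ τ * (s / τ) :=
        mul_le_mul_of_nonneg_left (Nat.floor_le (div_nonneg hs hτ.le)) hτ.le
    _ = s := mul_div_cancel₀ s hτ.ne'

lemma sub_leftGrid_le (hτ : 0 < τ) (s : ℝ) : s - leftGrid τ s ≤ τ := by
  have hfloor : τ * (s / τ) ≤ τ * (⌊s / τ⌋₊ + 1) :=
    mul_le_mul_of_nonneg_left (Nat.lt_floor_add_one (s / τ)).le hτ.le
  rw [mul_div_cancel₀ s hτ.ne', mul_add_one] at hfloor
  unfold leftGrid
  linarith

lemma monotone_leftGrid (hτ : 0 ≤ τ) : Monotone (leftGrid τ) := fun _ _ hab =>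
  mul_le_mul_of_nonneg_left (Nat.cast_le.mpr (Nat.floor_mono (by gcongr))) hτ

end LeftGrid

lemma one_sub_exp_neg_nonneg {y : ℝ} (hy : 0 ≤ y) : 0 ≤ 1 - exp (-y) :=
  sub_nonneg.mpr (exp_le_one_iff.mpr (neg_nonpos.mpr hy))

lemma one_sub_exp_neg_le_min (y : ℝ) : 1 - exp (-y) ≤ min 1 y :=
  le_min (sub_le_self 1 (exp_pos _).le) (by linarith [one_sub_le_exp_neg y])

lemma integral_exp_neg_mul_sub (c t : ℝ) (hc : c ≠ 0) :
    ∫ s in (0:ℝ)..t, exp (-(c * (t - s))) = (1 - exp (-(c * t))) / c := by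
  have hF : ∀ s ∈ uIcc 0 t,
      HasDerivAt (fun s => exp (-(c * (t - s))) / c) (exp (-(c * (t - s)))) s :=
    fun s _ => ((((hasDerivAt_id s).const_sub t).const_mul c).neg.exp.div_const c).congr_deriv
      (by field_simp; rfl)
  rw [intervalIntegral.integral_eq_sub_of_hasDerivAt hF
    (Continuous.intervalIntegrable (by fun_prop) _ _)]
  simp [sub_div]

lemma integral_exp_neg_mul_sub_mul_le {c t C : ℝ} {g : ℝ → ℝ} (hc : 0 < c) (ht : 0 ≤ t)
    (hg : Measurable g) (hg0 : ∀ s ∈ Icc 0 t, 0 ≤ g s) (hgC : ∀ s ∈ Icc 0 t, g s ≤ C) :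
    ∫ s in (0:ℝ)..t, exp (-(c * (t - s))) * g s ≤ C / c := by
  have hg_int : IntervalIntegrable g MeasureTheory.volume 0 t := by
    refine (intervalIntegrable_const (c := C)).mono_fun' hg.aestronglyMeasurable ?_
    filter_upwards [MeasureTheory.ae_restrict_mem measurableSet_uIoc] with s hs
    rw [uIoc_of_le ht] at hs
    rw [Real.norm_of_nonneg (hg0 s (Ioc_subset_Icc_self hs))]
    exact hgC s (Ioc_subset_Icc_self hs)
  have hC : 0 ≤ C := (hg0 0 ⟨le_rfl, ht⟩).trans (hgC 0 ⟨le_rfl, ht⟩)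
  calc ∫ s in (0:ℝ)..t, exp (-(c * (t - s))) * g s
      ≤ ∫ s in (0:ℝ)..t, exp (-(c * (t - s))) * C :=
        intervalIntegral.integral_mono_on ht (hg_int.continuousOn_mul (by fun_prop))
          (Continuous.intervalIntegrable (by fun_prop) _ _)
          fun s hs => mul_le_mul_of_nonneg_left (hgC s hs) (exp_pos _).le
    _ = C * ((1 - exp (-(c * t))) / c) := by
        rw [intervalIntegral.integral_mul_const, integral_exp_neg_mul_sub c t hc.ne', mul_comm]
    _ ≤ C / c := by
        rw [← mul_div_assoc]
        gcongr
        exact mul_le_of_le_one_right hC (sub_le_self 1 (exp_pos _).le)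

/-- For real numbers `λ > 0`, `τ > 0` and `t > 0`, one has
`∫_0^t e^{-2λ(t-s)} (1 - e^{-λ(s - ℓ_τ(s))})² ds ≤ min (1, λτ)² / (2λ)`. -/
theorem integral_exp_grid_increment_bound (lam τ t : ℝ)
    (hlam : 0 < lam) (hτ : 0 < τ) (ht : 0 < t) :
    ∫ s in (0:ℝ)..t,
        Real.exp (-2 * lam * (t - s)) * (1 - Real.exp (-lam * (s - leftGrid τ s))) ^ 2 ≤
      (min 1 (lam * τ)) ^ 2 / (2 * lam) := by
  -- `-2 * lam` is `(-2) * lam`: bring both exponents to the form `-(a * b)`.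
  simp only [neg_mul]
  have hmeas : Measurable fun s => (1 - exp (-(lam * (s - leftGrid τ s)))) ^ 2 := by
    have := (monotone_leftGrid hτ.le).measurable
    fun_prop
  refine integral_exp_neg_mul_sub_mul_le (by positivity) ht.le hmeas (fun _ _ => sq_nonneg _) ?_
  intro s hs
  have hinc : 0 ≤ lam * (s - leftGrid τ s) :=
    mul_nonneg hlam.le (sub_nonneg.mpr (leftGrid_le_self hτ hs.1))
  refine pow_le_pow_left₀ (one_sub_exp_neg_nonneg hinc) ?_ 2
  exact (one_sub_exp_neg_le_min _).trans
    (min_le_min_left 1 (mul_le_mul_of_nonneg_left (sub_leftGrid_le hτ s) hlam.le))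
end

section
/- (Discrete Grönwall inequality with singular kernel.) For all C, T ∈ (0, ∞) there exists C_T ∈ (0, ∞), depending only on C and T, with the following property: for every positive integer M, with τ = T/M and t_k = kτ, if a real number A ≥ 0 and nonnegative reals a_0, a_1, …, a_M satisfy a_0 ≤ A and a_m ≤ A + C τ Σ_{k=0}^{m−1} a_k / √(t_m − t_k) for all m ∈ {1, …, M}, then max_{0 ≤ m ≤ M} a_m ≤ C_T · A. -/
/-!
Cut the kernel at distance `δ = (4C)⁻²`. Since `(y - x) / √y ≤ 2 (√y - √x)`, the near part
`τ ∑_{t_m - t_k ≤ δ} 1 / √(t_m - t_k)` telescopes to at most `2√δ`, so it costs at most half of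
any bound `P` valid up to time `t_m`. The far part has kernel at most `1 / √δ` and only involves
times at least one block of length `δ` earlier, where the bound is smaller by a factor `L`.
Strong induction then gives `a_m ≤ A L ^ ⌈t_m / δ⌉` with `L = 2 + 8 C² T`, and `t_m ≤ T`.
-/

open Finset Real

theorem sub_div_sqrt_le_two_mul_sub_sqrt {x y : ℝ} (hx : 0 ≤ x) (hxy : x ≤ y) :
    (y - x) / √y ≤ 2 * (√y - √x) := by
  rcases hxy.eq_or_lt with rfl | hlt
  · simp
  have hy : 0 < √y := sqrt_pos.mpr (hx.trans_lt hlt)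
  have hsqrt : √x ≤ √y := sqrt_le_sqrt hlt.le
  rw [div_le_iff₀ hy]
  nlinarith [sq_sqrt hx, sq_sqrt (hx.trans hlt.le), sqrt_nonneg x]

theorem mul_sum_range_ite_inv_sqrt_le {τ δ : ℝ} (hτ : 0 < τ) (hδ : 0 ≤ δ) (n : ℕ) :
    τ * ∑ j ∈ range n, (if (j + 1) * τ ≤ δ then 1 / √((j + 1) * τ) else 0)
      ≤ 2 * √(min (n * τ) δ) := by
  induction n with
  | zero => simp [hδ]
  | succ n ih =>
    rw [sum_range_succ, mul_add]
    push_cast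
    split_ifs with h
    · have hstep := sub_div_sqrt_le_two_mul_sub_sqrt (by positivity : 0 ≤ n * τ)
        (by nlinarith : (n : ℝ) * τ ≤ (n + 1) * τ)
      rw [show ((n : ℝ) + 1) * τ - n * τ = τ by ring] at hstep
      rw [min_eq_left (by nlinarith)] at ih
      rw [min_eq_left h, mul_one_div]
      linarith
    · have : √(min (n * τ) δ) ≤ √(min ((n + 1) * τ) δ) :=
        sqrt_le_sqrt (min_le_min_right _ (by nlinarith))
      linarith

theorem mul_sum_range_near_inv_sqrt_le {τ δ : ℝ} (hτ : 0 < τ) (hδ : 0 ≤ δ) (m : ℕ) :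
    τ * ∑ k ∈ range m, (if m * τ - k * τ ≤ δ then 1 / √(m * τ - k * τ) else 0)
      ≤ 2 * √δ := by
  have hreflect : ∑ k ∈ range m, (if m * τ - k * τ ≤ δ then 1 / √(m * τ - k * τ) else 0)
      = ∑ j ∈ range m, (if (j + 1) * τ ≤ δ then 1 / √((j + 1) * τ) else 0) := by
    rw [← sum_range_reflect]
    refine sum_congr rfl fun j hj => ?_
    have hj : j < m := mem_range.mp hj
    rw [show (m : ℝ) * τ - ((m - 1 - j : ℕ) : ℝ) * τ = (j + 1) * τ by
      rw [Nat.cast_sub (by omega), Nat.cast_sub (by omega)]; push_cast; ring]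
  rw [hreflect]
  exact (mul_sum_range_ite_inv_sqrt_le hτ hδ m).trans
    (by gcongr; exact min_le_right _ _)

theorem div_sqrt_le_near_add_far {x d δ L P : ℝ} (hd : 0 < d) (hδ : 0 < δ) (hL : 0 < L)
    (hP : 0 ≤ P) (hnear : x ≤ P) (hfar : δ < d → L * x ≤ P) :
    x / √d ≤ P * ((if d ≤ δ then 1 / √d else 0) + 1 / (L * √δ)) := by
  have hsd : 0 < √d := sqrt_pos.mpr hd
  have hsδ : 0 < √δ := sqrt_pos.mpr hδ
  split_ifs with h
  · calc x / √d ≤ P / √d := by gcongr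
      _ ≤ P * (1 / √d + 1 / (L * √δ)) := by
        rw [mul_add, mul_one_div]; linarith [show 0 ≤ P * (1 / (L * √δ)) by positivity]
  · rw [zero_add]
    rcases le_total x 0 with hx | hx
    · exact (div_nonpos_of_nonpos_of_nonneg hx hsd.le).trans (by positivity)
    calc x / √d ≤ x / √δ := by gcongr; exact (not_le.mp h).le
      _ ≤ P * (1 / (L * √δ)) := by
        rw [mul_one_div, div_le_div_iff₀ hsδ (by positivity)]
        nlinarith [hfar (not_le.mp h)]

theorem mul_sum_div_sqrt_le {τ δ L P : ℝ} {a : ℕ → ℝ} {m : ℕ} (hτ : 0 < τ) (hδ : 0 < δ)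
    (hL : 0 < L) (hP : 0 ≤ P) (hnear : ∀ k < m, a k ≤ P)
    (hfar : ∀ k < m, δ < m * τ - k * τ → L * a k ≤ P) :
    τ * ∑ k ∈ range m, a k / √(m * τ - k * τ) ≤ P * (2 * √δ + m * τ / (L * √δ)) := by
  have hterm : ∀ k ∈ range m, a k / √(m * τ - k * τ) ≤
      P * ((if m * τ - k * τ ≤ δ then 1 / √(m * τ - k * τ) else 0) + 1 / (L * √δ)) := by
    intro k hk
    have hk := mem_range.mp hk
    have hkm : (k : ℝ) < m := by exact_mod_cast hk
    exact div_sqrt_le_near_add_far (by nlinarith) hδ hL hP (hnear k hk) (hfar k hk)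
  calc τ * ∑ k ∈ range m, a k / √(m * τ - k * τ)
      ≤ τ * ∑ k ∈ range m, P * ((if m * τ - k * τ ≤ δ then 1 / √(m * τ - k * τ) else 0)
          + 1 / (L * √δ)) := by gcongr with k hk; exact hterm k hk
    _ = P * (τ * ∑ k ∈ range m, (if m * τ - k * τ ≤ δ then 1 / √(m * τ - k * τ) else 0)
          + m * τ / (L * √δ)) := by
        rw [← mul_sum, sum_add_distrib, sum_const, card_range, nsmul_eq_mul]; ring
    _ ≤ P * (2 * √δ + m * τ / (L * √δ)) := by
        have := mul_sum_range_near_inv_sqrt_le hτ hδ.le m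
        gcongr

theorem Nat.ceil_add_one_le_ceil {R : Type*} [Semiring R] [LinearOrder R]
    [IsStrictOrderedRing R] [FloorSemiring R] {x y : R} (hx : 0 ≤ x) (hxy : x + 1 ≤ y) :
    ⌈x⌉₊ + 1 ≤ ⌈y⌉₊ :=
  Nat.add_one_le_ceil_iff.mpr ((Nat.ceil_lt_add_one hx).trans_le hxy)

theorem le_mul_pow_ceil_of_le_add_mul_sum_div_sqrt {C τ δ L A : ℝ} {M : ℕ} {a : ℕ → ℝ}
    (hC : 0 ≤ C) (hτ : 0 < τ) (hδ : 0 < δ) (hL : 1 ≤ L) (hA : 0 ≤ A)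
    (hCL : C * (2 * √δ + M * τ / (L * √δ)) + 1 / L ≤ 1) (h0 : a 0 ≤ A)
    (hrec : ∀ m, 1 ≤ m → m ≤ M → a m ≤ A + C * τ * ∑ k ∈ range m, a k / √(m * τ - k * τ)) :
    ∀ m ≤ M, a m ≤ A * L ^ ⌈m * τ / δ⌉₊ := by
  intro m
  induction m using Nat.strong_induction_on with
  | _ m ih =>
  intro hmM
  rcases Nat.eq_zero_or_pos m with rfl | hm
  · simpa using h0
  have hpow : ∀ {i j : ℕ}, i ≤ j → A * L ^ i ≤ A * L ^ j := fun hij =>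
    mul_le_mul_of_nonneg_left (pow_le_pow_right₀ hL hij) hA
  have hnear : ∀ k < m, a k ≤ A * L ^ ⌈m * τ / δ⌉₊ := fun k hk =>
    (ih k hk (by omega)).trans (hpow (Nat.ceil_le_ceil (by gcongr)))
  have hfar : ∀ k < m, δ < m * τ - k * τ → L * a k ≤ A * L ^ ⌈m * τ / δ⌉₊ := by
    intro k hk hδk
    have hceil : ⌈k * τ / δ⌉₊ + 1 ≤ ⌈m * τ / δ⌉₊ := Nat.ceil_add_one_le_ceil (by positivity)
      (by rw [div_add_one hδ.ne', div_le_div_iff_of_pos_right hδ]; linarith)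
    calc L * a k ≤ L * (A * L ^ ⌈k * τ / δ⌉₊) :=
          mul_le_mul_of_nonneg_left (ih k hk (by omega)) (by linarith)
      _ = A * L ^ (⌈k * τ / δ⌉₊ + 1) := by ring
      _ ≤ A * L ^ ⌈m * τ / δ⌉₊ := hpow hceil
  have hsum := mul_sum_div_sqrt_le hτ hδ (by linarith) (by positivity) hnear hfar
  have hAL : A * L ≤ A * L ^ ⌈m * τ / δ⌉₊ := by
    simpa using hpow (Nat.one_le_iff_ne_zero.mpr (by positivity) : 1 ≤ ⌈m * τ / δ⌉₊)
  have hmM' : (m : ℝ) * τ ≤ M * τ := by gcongr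
  have hX : C * (2 * √δ + m * τ / (L * √δ)) ≤ 1 - 1 / L := by
    have : C * (2 * √δ + m * τ / (L * √δ)) ≤ C * (2 * √δ + M * τ / (L * √δ)) := by gcongr
    linarith
  have hA' : A ≤ A * L ^ ⌈m * τ / δ⌉₊ / L := by
    rw [le_div_iff₀ (by linarith)]; exact hAL
  calc a m ≤ A + C * (τ * ∑ k ∈ range m, a k / √(m * τ - k * τ)) := by
        rw [← mul_assoc]; exact hrec m hm hmM
    _ ≤ A + C * (A * L ^ ⌈m * τ / δ⌉₊ * (2 * √δ + m * τ / (L * √δ))) := by gcongr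
    _ = A + A * L ^ ⌈m * τ / δ⌉₊ * (C * (2 * √δ + m * τ / (L * √δ))) := by ring
    _ ≤ A + A * L ^ ⌈m * τ / δ⌉₊ * (1 - 1 / L) := by gcongr
    _ ≤ A * L ^ ⌈m * τ / δ⌉₊ := by rw [mul_sub, mul_one, mul_one_div]; linarith

/-- Discrete Grönwall inequality with singular kernel: for all
`C, T ∈ (0, ∞)` there exists `C_T ∈ (0, ∞)`, depending only on `C` and `T`, such that
for every `M ∈ ℕ`, `M ≥ 1`, with `τ = T/M` and `t_k = kτ`, whenever `A ≥ 0` and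
nonnegative reals `a_0, …, a_M` satisfy `a_0 ≤ A` and
`a_m ≤ A + C τ Σ_{k=0}^{m-1} a_k / √(t_m - t_k)` for all `1 ≤ m ≤ M`, one has
`a_m ≤ C_T A` for all `0 ≤ m ≤ M`. -/
theorem discrete_gronwall_singular_kernel (C T : ℝ) (hC : 0 < C) (hT : 0 < T) :
    ∃ CT : ℝ, 0 < CT ∧
      ∀ (M : ℕ), 1 ≤ M → ∀ (A : ℝ), 0 ≤ A → ∀ a : ℕ → ℝ,
        (∀ m ≤ M, 0 ≤ a m) → a 0 ≤ A →
        (∀ m, 1 ≤ m → m ≤ M →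
          a m ≤ A + C * (T / M) *
            ∑ k ∈ Finset.range m,
              a k / Real.sqrt ((m : ℝ) * (T / M) - (k : ℝ) * (T / M))) →
        ∀ m ≤ M, a m ≤ CT * A := by
  -- `2 C √δ = 1 / 2` and `(4 C² T + 1) / L = 1 / 2`, so `hCL` below holds with equality.
  set δ := (1 / (4 * C)) ^ 2
  set L := 2 + 8 * C ^ 2 * T
  have hL : 1 ≤ L := by linarith [show 0 ≤ 8 * C ^ 2 * T by positivity]
  have hsqrt : √δ = 1 / (4 * C) := sqrt_sq (by positivity)
  refine ⟨L ^ ⌈T / δ⌉₊, by positivity, fun M hM A hA a _ h0 hrec m hm => ?_⟩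
  have hτ : 0 < T / M := by positivity
  have hMτ : (M : ℝ) * (T / M) = T := mul_div_cancel₀ _ (by positivity)
  have hCL : C * (2 * √δ + M * (T / M) / (L * √δ)) + 1 / L ≤ 1 := by
    rw [hMτ, hsqrt]; field_simp; linarith [show L = 2 + 8 * C ^ 2 * T from rfl]
  have htm : (m : ℝ) * (T / M) ≤ T := (by gcongr : (m : ℝ) * (T / M) ≤ M * (T / M)).trans_eq hMτ
  calc a m ≤ A * L ^ ⌈m * (T / M) / δ⌉₊ :=
        le_mul_pow_ceil_of_le_add_mul_sum_div_sqrt hC.le hτ (by positivity) hL hA hCL h0 hrec m hm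
    _ ≤ A * L ^ ⌈T / δ⌉₊ := by gcongr
    _ = L ^ ⌈T / δ⌉₊ * A := mul_comm _ _
end

section
/- (Pathwise positivity preservation of the Lie–Trotter splitting scheme.) Let N ≥ 2 and M ≥ 1 be integers, τ > 0 a real number, f : ℝ → ℝ an arbitrary function, and (w_{m,n})_{0 ≤ m ≤ M−1, 1 ≤ n ≤ N−1} arbitrary real numbers. Let u_0 ∈ ℝ^{N−1} have all entries nonnegative, and define recursively, for m = 0, …, M−1, the vector u_{m+1} = exp(τ N² D^N) · û_{m+1}, where û_{m+1} ∈ ℝ^{N−1} has entries û_{m+1,n} = exp(√N · f(u_{m,n}) · w_{m,n} − N f(u_{m,n})² τ / 2) · u_{m,n}. Then for every m ∈ {0, …, M} and every n ∈ {1, …, N−1}, one has u_{m,n} ≥ 0. -/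
open NormedSpace

namespace Matrix

variable {ι : Type*} [Fintype ι] [DecidableEq ι]

theorem pow_nonneg_of_nonneg {A : Matrix ι ι ℝ} (hA : ∀ i j, 0 ≤ A i j) (n : ℕ) (i j : ι) :
    0 ≤ (A ^ n) i j := by
  induction n generalizing j with
  | zero => by_cases h : i = j <;> simp [h]
  | succ n ih =>
    rw [pow_succ, mul_apply]
    exact Finset.sum_nonneg fun k _ => mul_nonneg (ih k) (hA k j)

open scoped Norms.Operator in
theorem exp_nonneg_of_nonneg {A : Matrix ι ι ℝ} (hA : ∀ i j, 0 ≤ A i j) (i j : ι) :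
    0 ≤ exp A i j := by
  have hsum := Pi.hasSum.mp (Pi.hasSum.mp (exp_series_hasSum_exp' (𝕂 := ℝ) A) i) j
  exact hsum.nonneg fun n => mul_nonneg (by positivity) (pow_nonneg_of_nonneg hA n i j)

open scoped Norms.Operator in
theorem exp_nonneg_of_offDiag_nonneg {A : Matrix ι ι ℝ} (hA : ∀ i j, i ≠ j → 0 ≤ A i j)
    (i j : ι) : 0 ≤ exp A i j := by
  set c := ∑ k, |A k k|
  have hshift : ∀ i j, 0 ≤ (A + c • 1) i j := by
    intro i j
    rcases eq_or_ne i j with rfl | hij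
    · have : |A i i| ≤ c := Finset.single_le_sum (f := fun k => |A k k|)
        (fun _ _ => abs_nonneg _) (Finset.mem_univ i)
      simp only [add_apply, smul_apply, one_apply_eq, smul_eq_mul, mul_one]
      linarith [neg_abs_le (A i i)]
    · simpa [one_apply_ne hij] using hA i j hij
  have hsplit : exp A = exp (A + c • 1) * Real.exp (-c) • 1 := by
    have hcomm : Commute (A + c • 1) (algebraMap ℝ _ (-c)) := Algebra.commute_algebraMap_right _ _
    have hscalar : Real.exp (-c) • (1 : Matrix ι ι ℝ) = exp (algebraMap ℝ _ (-c)) := by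
      rw [← Algebra.algebraMap_eq_smul_one, Real.exp_eq_exp_ℝ]
      exact algebraMap_exp_comm (-c)
    rw [hscalar, ← exp_add_of_commute _ _ hcomm, Algebra.algebraMap_eq_smul_one, neg_smul,
      add_neg_cancel_right]
  rw [hsplit, mul_smul_comm, mul_one, smul_apply, smul_eq_mul]
  exact mul_nonneg (Real.exp_pos _).le (exp_nonneg_of_nonneg hshift i j)

theorem mulVec_nonneg {m n : Type*} [Fintype n] {A : Matrix m n ℝ} (hA : ∀ i j, 0 ≤ A i j)
    {v : n → ℝ} (hv : ∀ j, 0 ≤ v j) (i : m) : 0 ≤ (A *ᵥ v) i :=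
  Finset.sum_nonneg fun j _ => mul_nonneg (hA i j) (hv j)

end Matrix

theorem DN_offDiag_nonneg (N : ℕ) {i j : Fin (N - 1)} (hij : i ≠ j) : 0 ≤ DN N i j := by
  simp only [DN, Fin.val_eq_val, hij, if_false]
  split_ifs <;> norm_num

theorem lie_trotter_positivity_general (N M : ℕ)
    (τ : ℝ) (hτ : 0 < τ) (f : ℝ → ℝ)
    (w : ℕ → Fin (N - 1) → ℝ)
    (u : ℕ → Fin (N - 1) → ℝ)
    (h0 : ∀ n : Fin (N - 1), 0 ≤ u 0 n)
    (hrec : ∀ m < M,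
      u (m + 1) = (NormedSpace.exp (τ • ((N : ℝ) ^ 2 • DN N))).mulVec
        (fun n : Fin (N - 1) =>
          Real.exp (Real.sqrt N * f (u m n) * w m n - (N : ℝ) * f (u m n) ^ 2 * τ / 2) *
            u m n)) :
    ∀ m ≤ M, ∀ n : Fin (N - 1), 0 ≤ u m n := by
  have hdiffusion : ∀ i j, 0 ≤ exp (τ • ((N : ℝ) ^ 2 • DN N)) i j :=
    Matrix.exp_nonneg_of_offDiag_nonneg fun i j hij =>
      mul_nonneg hτ.le (mul_nonneg (sq_nonneg _) (DN_offDiag_nonneg N hij))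
  intro m
  induction m with
  | zero => exact fun _ => h0
  | succ m ih =>
    intro hm
    rw [hrec m hm]
    exact Matrix.mulVec_nonneg hdiffusion fun n => mul_nonneg (Real.exp_pos _).le (ih (Nat.le_of_succ_le hm) n)

/-- Pathwise positivity preservation of the Lie–Trotter splitting
scheme: with `N ≥ 2`, `M ≥ 1`, time step `τ > 0`, an arbitrary function `f : ℝ → ℝ`,
arbitrary real increments `w_{m,n}`, and a nonnegative initial vector `u 0`, the
recursion
`u (m+1) = exp (τ N² Dᴺ) ⬝ (exp (√N f(u_{m,n}) w_{m,n} - N f(u_{m,n})² τ / 2) u_{m,n})ₙ`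
produces vectors `u m` with all entries nonnegative, for every `m ∈ {0, …, M}`. -/
theorem lie_trotter_positivity (N M : ℕ) (hN : 2 ≤ N) (hM : 1 ≤ M)
    (τ : ℝ) (hτ : 0 < τ) (f : ℝ → ℝ)
    (w : ℕ → Fin (N - 1) → ℝ)
    (u : ℕ → Fin (N - 1) → ℝ)
    (h0 : ∀ n : Fin (N - 1), 0 ≤ u 0 n)
    (hrec : ∀ m < M,
      u (m + 1) = (NormedSpace.exp (τ • ((N : ℝ) ^ 2 • DN N))).mulVec
        (fun n : Fin (N - 1) =>
          Real.exp (Real.sqrt N * f (u m n) * w m n - (N : ℝ) * f (u m n) ^ 2 * τ / 2) *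
            u m n)) :
    ∀ m ≤ M, ∀ n : Fin (N - 1), 0 ≤ u m n :=
  lie_trotter_positivity_general N M τ hτ f w u h0 hrec
end
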